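/- arXiv:2504.14842 — 2 statements merged into one kernel-verified Lean document; each statement's English description precedes it below -/
import Mathlib

section
/- Let m \ge 0 and 0 \le s \le m, and let f : (Fin m \to F_2) \to F_2 be a nonzero element of the F_2-linear span of the monomial functions e_S(v) = \prod_{i \in S} v_i over subsets S \subseteq Fin m with |S| \le s. Then |{v : f(v) = 1}| \ge 2^{m-s}. -/
/-!
Write `f = ∑_S c_S e_S` and pick `T` of maximal size with `c_T ≠ 0`. Summing `e_S` over a
subcube in which exactly the coordinates of `T` vary gives `0` unless `T ⊆ S` (a free
coordinate outside `S` contributes `1 + 1 = 0`), and gives `1` for `S = T`. So `f` sums to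
`c_T = 1` over each of the `2 ^ (m - |T|)` disjoint translates of that subcube, and hence takes
the value `1` somewhere in each of them.
-/

open Finset

namespace ReedMuller

variable {ι : Type*}

def monomial (S : Finset ι) (v : ι → ZMod 2) : ZMod 2 := ∏ i ∈ S, v i

variable [Fintype ι] [DecidableEq ι]

def subcube (T : Finset ι) (w : ι → ZMod 2) : Finset (ι → ZMod 2) :=
  Fintype.piFinset fun i => if i ∈ T then univ else {w i}

theorem mem_subcube {T : Finset ι} {w v : ι → ZMod 2} :
    v ∈ subcube T w ↔ ∀ i ∉ T, v i = w i := by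
  simp only [subcube, Fintype.mem_piFinset]
  refine forall_congr' fun i => ?_
  by_cases hi : i ∈ T <;> simp [hi]

theorem card_subcube (T : Finset ι) (w : ι → ZMod 2) : #(subcube T w) = 2 ^ #T := by
  simp [subcube, Fintype.card_piFinset, apply_ite, prod_ite_mem]

theorem sum_subcube_monomial (T S : Finset ι) (w : ι → ZMod 2) :
    ∑ v ∈ subcube T w, monomial S v =
      ∏ i, ∑ x ∈ (if i ∈ T then univ else {w i}), if i ∈ S then x else 1 := by
  rw [prod_univ_sum]
  refine sum_congr rfl fun v _ => ?_
  rw [monomial, prod_ite_mem, univ_inter]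

theorem sum_subcube_monomial_of_not_subset {T S : Finset ι} (h : ¬T ⊆ S) (w : ι → ZMod 2) :
    ∑ v ∈ subcube T w, monomial S v = 0 := by
  obtain ⟨i, hiT, hiS⟩ := not_subset.1 h
  rw [sum_subcube_monomial]
  refine prod_eq_zero (mem_univ i) ?_
  simp only [if_pos hiT, if_neg hiS]
  decide

theorem sum_subcube_monomial_self (T : Finset ι) (w : ι → ZMod 2) :
    ∑ v ∈ subcube T w, monomial T v = 1 := by
  rw [sum_subcube_monomial]
  refine prod_eq_one fun i _ => ?_
  by_cases hi : i ∈ T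
  · simp only [if_pos hi]
    decide
  · simp [hi]

theorem sum_subcube_linearCombination_monomial {l : Finset ι →₀ ZMod 2} {T : Finset ι}
    (hT : ∀ S ∈ l.support, T ⊆ S → S = T) (w : ι → ZMod 2) :
    ∑ v ∈ subcube T w, Finsupp.linearCombination (ZMod 2) monomial l v = l T := by
  simp only [Finsupp.linearCombination_apply, Finsupp.sum, Finset.sum_apply, Pi.smul_apply,
    smul_eq_mul]
  rw [sum_comm]
  simp_rw [← mul_sum]
  rw [sum_eq_single T]
  · rw [sum_subcube_monomial_self, mul_one]
  · intro S hS hST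
    rw [sum_subcube_monomial_of_not_subset (fun h => hST (hT S hS h)), mul_zero]
  · intro hT
    rw [Finsupp.notMem_support_iff.1 hT, zero_mul]

theorem two_pow_le_card_filter_eq_one {f : (ι → ZMod 2) → ZMod 2} {T : Finset ι}
    (hf : ∀ w, ∑ v ∈ subcube T w, f v = 1) :
    2 ^ (Fintype.card ι - #T) ≤ #{v | f v = 1} := by
  have hsurj : Set.SurjOn (fun v => Tᶜ.piecewise v (0 : ι → ZMod 2))
      ({v | f v = 1} : Finset _) (subcube Tᶜ 0) := by
    intro w hw
    obtain ⟨v, hv, hfv⟩ := exists_ne_zero_of_sum_ne_zero ((hf w).trans_ne one_ne_zero)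
    replace hfv : f v = 1 := Fin.eq_one_of_ne_zero _ hfv
    refine ⟨v, by simpa using hfv, funext fun i => ?_⟩
    by_cases hi : i ∈ T
    · simp [hi, mem_subcube.1 hw i (by simpa using hi)]
    · simp [hi, mem_subcube.1 hv i hi]
  simpa [card_subcube, card_compl] using card_le_card_of_surjOn _ hsurj

end ReedMuller

open ReedMuller in
theorem rm_min_distance_general (m s : ℕ)
    (f : (Fin m → ZMod 2) → ZMod 2)
    (hf : f ∈ Submodule.span (ZMod 2)
      {g : (Fin m → ZMod 2) → ZMod 2 |
        ∃ S : Finset (Fin m), S.card ≤ s ∧ g = fun v => ∏ i ∈ S, v i})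
    (hf0 : f ≠ 0) :
    2 ^ (m - s) ≤ (Finset.univ.filter fun v : Fin m → ZMod 2 => f v = 1).card := by
  have hspan : f ∈ Submodule.span (ZMod 2) (monomial '' {S | #S ≤ s}) := by
    convert hf using 2
    ext g
    simp only [Set.mem_image, Set.mem_ofPred_eq, eq_comm]
    rfl
  obtain ⟨l, hl, rfl⟩ := (Finsupp.mem_span_image_iff_linearCombination _).1 hspan
  have hl0 : l.support.Nonempty := by
    rw [Finsupp.support_nonempty_iff]
    rintro rfl
    exact hf0 (map_zero _)
  obtain ⟨T, hT, hTmax⟩ := l.support.exists_max_image card hl0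
  have hsum : ∀ w, ∑ v ∈ subcube T w, Finsupp.linearCombination (ZMod 2) monomial l v = 1 := by
    intro w
    rw [sum_subcube_linearCombination_monomial
      (fun S hS hTS => (eq_of_subset_of_card_le hTS (hTmax S hS)).symm)]
    exact Fin.eq_one_of_ne_zero _ (Finsupp.mem_support_iff.1 hT)
  calc 2 ^ (m - s) ≤ 2 ^ (Fintype.card (Fin m) - #T) := by
        rw [Fintype.card_fin]
        exact Nat.pow_le_pow_right two_pos (Nat.sub_le_sub_left (hl hT) m)
    _ ≤ _ := two_pow_le_card_filter_eq_one hsum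

/-- For `0 ≤ s ≤ m`, every nonzero element of the span of the monomials
`e_S` with `|S| ≤ s` (i.e. every nonzero codeword of `RM(s, m)`) has Hamming weight at least
`2^(m-s)`. -/
theorem rm_min_distance (m s : ℕ) (hs : s ≤ m)
    (f : (Fin m → ZMod 2) → ZMod 2)
    (hf : f ∈ Submodule.span (ZMod 2)
      {g : (Fin m → ZMod 2) → ZMod 2 |
        ∃ S : Finset (Fin m), S.card ≤ s ∧ g = fun v => ∏ i ∈ S, v i})
    (hf0 : f ≠ 0) :
    2 ^ (m - s) ≤ (Finset.univ.filter fun v : Fin m → ZMod 2 => f v = 1).card :=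
  rm_min_distance_general m s f hf hf0
end

section
/- For all reals \epsilon, \delta with 0 < \epsilon < 1/2 and 0 < \delta < 1/2 there exists a positive integer n_0 such that the following holds: for every even integer n = 2M \ge n_0, every subset A of an n-element set X with |A| = M, and every even integer w with \epsilon n \le w \le (1-\epsilon) n, the number of w-element subsets S \subseteq X with |S \cap A| even is at most (1/2 + \delta) \binom{n}{w}. -/
/-!
Weight each `w`-subset `S` by `(-1) ^ |S ∩ A|`. The generating polynomial of these signs is
`(1 - X) ^ |A| * (1 + X) ^ |Aᶜ| = (1 - X²) ^ M`, so for `w = 2m` the even sets outnumber the odd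
ones by exactly `(-1) ^ m * C(M, m)`, and the even ones number at most `(C(2M, 2m) + C(M, m)) / 2`.
By Vandermonde, `M * C(M, m) ≤ C(M, m) ^ 2 ≤ C(2M, 2m)` whenever `0 < m < M`, so the excess is at
most `C(2M, 2m) / (2M)`; the central range of `w` forces `0 < m < M` once `M` is large.
-/

open Finset Polynomial

theorem Nat.self_le_choose {n k : ℕ} (hk : 0 < k) (hkn : k < n) : n ≤ n.choose k := by
  induction n generalizing k with
  | zero => omega
  | succ n ih =>
    obtain ⟨k, rfl⟩ := Nat.exists_eq_add_of_lt hk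
    rcases Nat.eq_zero_or_pos k with rfl | hk0
    · simp
    · rw [zero_add, Nat.choose_succ_succ']
      have := ih hk0 (by omega)
      have := Nat.choose_pos (show k + 1 ≤ n by omega)
      omega

theorem Nat.mul_choose_le_choose_two_mul {n k : ℕ} (hk : 0 < k) (hkn : k < n) :
    n * n.choose k ≤ (2 * n).choose (2 * k) :=
  calc n * n.choose k ≤ n.choose k * n.choose k :=
        Nat.mul_le_mul_right _ (Nat.self_le_choose hk hkn)
    _ ≤ ∑ ij ∈ antidiagonal (2 * k), n.choose ij.1 * n.choose ij.2 :=
        single_le_sum (f := fun ij ↦ n.choose ij.1 * n.choose ij.2) (a := (k, k))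
          (fun _ _ ↦ Nat.zero_le _) (mem_antidiagonal.2 (two_mul k).symm)
    _ = (2 * n).choose (2 * k) := by rw [two_mul n, Nat.add_choose_eq]

theorem Polynomial.coeff_prod_one_add_C_mul_X {ι R : Type*} [CommSemiring R] (s : Finset ι)
    (c : ι → R) (k : ℕ) :
    (∏ i ∈ s, (1 + C (c i) * X)).coeff k = ∑ t ∈ s.powersetCard k, ∏ i ∈ t, c i := by
  classical
  simp only [prod_one_add, prod_mul_distrib, prod_const, ← map_prod, finsetSum_coeff,
    coeff_C_mul_X_pow, powersetCard_eq_filter, sum_filter, eq_comm]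

theorem Polynomial.coeff_one_sub_X_pow {R : Type*} [CommRing R] (n k : ℕ) :
    ((1 - X) ^ n : R[X]).coeff k = (-1) ^ k * n.choose k := by
  have : (1 - X : R[X]) ^ n = ((1 + X) ^ n).comp (C (-1) * X) := by simp [sub_eq_add_neg]
  rw [this, comp_C_mul_X_coeff, coeff_one_add_X_pow, mul_comm]

theorem sum_neg_one_pow_card_inter_eq_coeff {α R : Type*} [Fintype α] [DecidableEq α]
    [CommRing R] (A : Finset α) (w : ℕ) :
    ∑ S ∈ powersetCard w univ, (-1 : R) ^ #(S ∩ A) =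
      ((1 - X) ^ #A * (1 + X) ^ #Aᶜ : R[X]).coeff w := by
  let c : α → R := fun i ↦ if i ∈ A then -1 else 1
  have hc (t : Finset α) : ∏ i ∈ t, c i = (-1) ^ #(t ∩ A) := by simp [c]
  have hprod : ∏ i, (1 + C (c i) * X) = (1 - X) ^ #A * (1 + X) ^ #Aᶜ := by
    rw [← prod_mul_prod_compl A]
    congr 1 <;> refine (prod_congr rfl fun i hi ↦ ?_).trans (prod_const _)
    · simp [c, hi, sub_eq_add_neg]
    · simp [c, mem_compl.1 hi]
  simp only [← hprod, coeff_prod_one_add_C_mul_X, hc]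

theorem sum_neg_one_pow_card_inter_of_card_eq {α R : Type*} [Fintype α] [DecidableEq α]
    [CommRing R] {M : ℕ} (hα : Fintype.card α = 2 * M) {A : Finset α} (hA : #A = M) (m : ℕ) :
    ∑ S ∈ powersetCard (2 * m) univ, (-1 : R) ^ #(S ∩ A) = (-1) ^ m * M.choose m := by
  have hAc : #Aᶜ = M := by rw [card_compl, hα, hA]; omega
  have hexpand : (1 - X : R[X]) ^ M * (1 + X) ^ M = expand R 2 ((1 - X) ^ M) := by
    rw [← mul_pow, map_pow, map_sub, map_one, expand_X]
    ring
  rw [sum_neg_one_pow_card_inter_eq_coeff, hA, hAc, hexpand, coeff_expand_mul' two_pos,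
    coeff_one_sub_X_pow]

theorem two_mul_card_filter_even_eq {β : Type*} (P : Finset β) (f : β → ℕ) :
    2 * (#(P.filter fun x ↦ Even (f x)) : ℤ) = #P + ∑ x ∈ P, (-1) ^ f x := by
  have h (n : ℕ) : (-1 : ℤ) ^ n = 2 * (if Even n then 1 else 0) - 1 := by
    rcases n.even_or_odd with h | h
    · simp [h.neg_one_pow, h]
    · simp [h.neg_one_pow, Nat.not_even_iff_odd.2 h]
  simp only [h, sum_sub_distrib, ← mul_sum, sum_boole, sum_const, nsmul_eq_mul, mul_one]
  ring

theorem two_mul_card_filter_even_card_inter_le {α : Type*} [Fintype α] [DecidableEq α] {M : ℕ}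
    (hα : Fintype.card α = 2 * M) {A : Finset α} (hA : #A = M) (m : ℕ) :
    2 * #((powersetCard (2 * m) univ).filter fun S ↦ Even #(S ∩ A)) ≤
      (2 * M).choose (2 * m) + M.choose m := by
  have htwice := two_mul_card_filter_even_eq (powersetCard (2 * m) univ) fun S ↦ #(S ∩ A)
  rw [sum_neg_one_pow_card_inter_of_card_eq hα hA, card_powersetCard, card_univ, hα] at htwice
  have hsign : (-1 : ℤ) ^ m * M.choose m ≤ M.choose m := by
    rcases m.even_or_odd with h | h <;> simp [h.neg_one_pow]
  zify
  linarith

theorem card_filter_even_card_inter_le {α : Type*} [Fintype α] [DecidableEq α] {M : ℕ}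
    (hα : Fintype.card α = 2 * M) {A : Finset α} (hA : #A = M) {m : ℕ} (hm : 0 < m)
    (hmM : m < M) :
    (#((powersetCard (2 * m) univ).filter fun S ↦ Even #(S ∩ A)) : ℝ) ≤
      (1 / 2 + 1 / (2 * M)) * (2 * M).choose (2 * m) := by
  have htwice : (2 * #((powersetCard (2 * m) univ).filter fun S ↦ Even #(S ∩ A)) : ℝ) ≤
      (2 * M).choose (2 * m) + M.choose m := by
    exact_mod_cast two_mul_card_filter_even_card_inter_le hα hA m
  have hM : (0 : ℝ) < M := by exact_mod_cast hm.trans hmM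
  have hchoose : (M.choose m : ℝ) ≤ (2 * M).choose (2 * m) / M := by
    rw [le_div_iff₀ hM, mul_comm]
    exact_mod_cast Nat.mul_choose_le_choose_two_mul hm hmM
  calc _ ≤ ((2 * M).choose (2 * m) + M.choose m : ℝ) / 2 := by linarith
    _ ≤ ((2 * M).choose (2 * m) + (2 * M).choose (2 * m) / M : ℝ) / 2 := by gcongr
    _ = _ := by field_simp

theorem even_split_probability_bound_general (ε δ : ℝ)
    (hε0 : 0 < ε) (hδ0 : 0 < δ) :
    ∃ n₀ : ℕ, 0 < n₀ ∧
      ∀ (X : Type) [Fintype X] [DecidableEq X] (M : ℕ),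
        Fintype.card X = 2 * M → n₀ ≤ 2 * M →
        ∀ A : Finset X, A.card = M →
        ∀ w : ℕ, Even w → ε * (2 * M) ≤ w → (w : ℝ) ≤ (1 - ε) * (2 * M) →
        (((Finset.powersetCard w (Finset.univ : Finset X)).filter
            fun S => Even (S ∩ A).card).card : ℝ) ≤
          (1 / 2 + δ) * ((2 * M).choose w) := by
  refine ⟨2 * (⌈ε⁻¹⌉₊ + ⌈δ⁻¹⌉₊ + 1), by omega, fun X _ _ M hX hn₀ A hA w hw hεw hwε ↦ ?_⟩
  obtain ⟨m, rfl⟩ : ∃ m, w = 2 * m := hw.exists_two_nsmul _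
  have hεM : 1 ≤ ε * M := (inv_le_iff_one_le_mul₀' hε0).1 (Nat.ceil_le.1 (by omega))
  have hδM : 1 ≤ δ * M := (inv_le_iff_one_le_mul₀' hδ0).1 (Nat.ceil_le.1 (by omega))
  have hm : 0 < m := by
    have : (1 : ℝ) ≤ m := by push_cast at hεw; linarith
    exact_mod_cast this
  have hmM : m < M := by
    have : (m : ℝ) + 1 ≤ M := by push_cast at hwε; linarith
    exact_mod_cast this
  have hM : (0 : ℝ) < M := by exact_mod_cast hm.trans hmM
  refine (card_filter_even_card_inter_le hX hA hm hmM).trans ?_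
  gcongr
  rw [div_le_iff₀ (by positivity)]
  linarith

/-- For all `0 < ε < 1/2` and `0 < δ < 1/2` there exists `n₀ ≥ 1` such that
for every even `n = 2M ≥ n₀`, every half-size subset `A` of an `n`-element set `X`, and every
even `w` with `εn ≤ w ≤ (1-ε)n`, the number of `w`-element subsets `S ⊆ X` with `|S ∩ A|`
even is at most `(1/2 + δ) C(n, w)`. -/
theorem even_split_probability_bound (ε δ : ℝ)
    (hε0 : 0 < ε) (hε : ε < 1 / 2) (hδ0 : 0 < δ) (hδ : δ < 1 / 2) :
    ∃ n₀ : ℕ, 0 < n₀ ∧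
      ∀ (X : Type) [Fintype X] [DecidableEq X] (M : ℕ),
        Fintype.card X = 2 * M → n₀ ≤ 2 * M →
        ∀ A : Finset X, A.card = M →
        ∀ w : ℕ, Even w → ε * (2 * M) ≤ w → (w : ℝ) ≤ (1 - ε) * (2 * M) →
        (((Finset.powersetCard w (Finset.univ : Finset X)).filter
            fun S => Even (S ∩ A).card).card : ℝ) ≤
          (1 / 2 + δ) * ((2 * M).choose w) :=
  even_split_probability_bound_general ε δ hε0 hδ0
end
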